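/- Suppose C' is a binary [56, 9] code containing the all-weight-56 codeword (i.e., a codeword of weight 56) whose nonzero weights lie in {24, 32, 56}, arising from an [56,8,{24,32}]_2 code C by adjoining a weight-56 word; then in C' one has a_56 = 1 and a_24 = a_32, and the MacWilliams identities force a_24 = a_32 = 255 and a_2^* = 10. -/

import Mathlib

open Finset

/-- Hamming weight of a binary word. -/
def wt {n : ℕ} (x : Fin n → ZMod 2) : ℕ := hammingNorm x

/-- The dual code of a binary linear code. -/
def dualCode {n : ℕ} (C : Submodule (ZMod 2) (Fin n → ZMod 2)) :
    Submodule (ZMod 2) (Fin n → ZMod 2) where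
  carrier := {x | ∀ c ∈ C, ∑ i, x i * c i = 0}
  zero_mem' := by intro c _; simp
  add_mem' := by
    intro a b ha hb c hc
    have h : ∑ i, (a + b) i * c i = (∑ i, a i * c i) + ∑ i, b i * c i := by
      rw [← Finset.sum_add_distrib]
      exact Finset.sum_congr rfl fun i _ => by simp [add_mul]
    simp only [Set.mem_setOf_eq] at *
    rw [h, ha c hc, hb c hc, add_zero]
  smul_mem' := by
    intro r a ha c hc
    have h : ∑ i, (r • a) i * c i = r * ∑ i, a i * c i := by
      rw [Finset.mul_sum]
      exact Finset.sum_congr rfl fun i _ => by simp [mul_assoc]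
    simp only [Set.mem_setOf_eq] at *
    rw [h, ha c hc, mul_zero]

/-- A code has full (effective) length if every coordinate is in the support of
some codeword. -/
def FullLength {n : ℕ} (C : Submodule (ZMod 2) (Fin n → ZMod 2)) : Prop :=
  ∀ i : Fin n, ∃ c ∈ C, c i ≠ 0

/-- The weight distribution: `wd C i` is the number of codewords of `C` of weight `i`. -/
noncomputable def wd {n : ℕ} (C : Submodule (ZMod 2) (Fin n → ZMod 2)) (i : ℕ) : ℕ :=
  Nat.card {c : Fin n → ZMod 2 // c ∈ C ∧ wt c = i}

/-!
Complementing with the all-one word `1 ∈ C` exchanges weights `w` and `n - w`, so `a₂₄ = a₃₂`, and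
`1 + 2 a₂₄ + 1 = 2⁹`. For the dual code, count in two ways the ordered pairs of coordinates `(i, j)`
separated by a codeword: a word of weight `w` separates `2 w (n - w)` of them, while a pair
separated by some codeword is separated by exactly half of `C`, since `c ↦ c i + c j` is then onto
`ZMod 2`. This second power moment fixes the number of pairs of equal columns of `C`; the
off-diagonal ones are, up to order, the supports of the weight-two words of the dual code.
-/

namespace BinaryCode

variable {n : ℕ}

lemma zmod_two_ne_zero_iff {x : ZMod 2} : x ≠ 0 ↔ x = 1 := by
  revert x; decide

lemma eq_of_ne_zero_iff {x y : Fin n → ZMod 2} (h : ∀ i, x i ≠ 0 ↔ y i ≠ 0) : x = y := by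
  have hcases : ∀ a b : ZMod 2, (a ≠ 0 ↔ b ≠ 0) → a = b := by decide
  exact funext fun i => hcases _ _ (h i)

lemma wt_add_wt_add_one (x : Fin n → ZMod 2) : wt x + wt (x + 1) = n := by
  have hflip : ∀ a : ZMod 2, a + 1 ≠ 0 ↔ ¬a ≠ 0 := by decide
  simp only [wt, hammingNorm, Pi.add_apply, Pi.one_apply, hflip]
  simpa using card_filter_add_card_filter_not (s := (univ : Finset (Fin n))) (fun i => x i ≠ 0)

lemma wt_one : wt (1 : Fin n → ZMod 2) = n := by
  simpa [wt] using wt_add_wt_add_one (0 : Fin n → ZMod 2)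

lemma eq_one_of_wt_eq {x : Fin n → ZMod 2} (h : wt x = n) : x = 1 := by
  have hx : wt (x + 1) = 0 := by have := wt_add_wt_add_one x; omega
  funext i
  exact CharTwo.add_eq_zero.1 (congrFun (hammingNorm_eq_zero.1 hx) i)

lemma card_filter_apply_ne (x : Fin n → ZMod 2) :
    #{p : Fin n × Fin n | x p.1 ≠ x p.2} = 2 * (wt x * (n - wt x)) := by
  set S : Finset (Fin n) := {i | x i ≠ 0} with hS
  have hsplit : ∀ a b : ZMod 2, a ≠ b ↔ (a ≠ 0 ∧ ¬b ≠ 0 ∨ ¬a ≠ 0 ∧ b ≠ 0) := by decide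
  have hpairs : ({p : Fin n × Fin n | x p.1 ≠ x p.2} : Finset _) = S ×ˢ Sᶜ ∪ Sᶜ ×ˢ S := by
    ext p
    simp only [mem_filter, mem_union, mem_product, mem_compl, mem_univ, true_and, hS]
    exact hsplit _ _
  rw [hpairs, card_union_of_disjoint (disjoint_product.2 (Or.inl disjoint_compl_right)),
    card_product, card_product, card_compl, Fintype.card_fin]
  change #S * (n - #S) + (n - #S) * #S = 2 * (#S * (n - #S))
  ring

section WeightTwo

variable {i j : Fin n}

lemma single_add_single_ne_zero_iff (hij : i ≠ j) (k : Fin n) :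
    (Pi.single i 1 + Pi.single j 1 : Fin n → ZMod 2) k ≠ 0 ↔ k = i ∨ k = j := by
  by_cases hi : k = i
  · subst hi; simp [hij]
  · by_cases hj : k = j
    · subst hj; simp [hi]
    · simp [hi, hj]

lemma wt_single_add_single (hij : i ≠ j) :
    wt (Pi.single i 1 + Pi.single j 1 : Fin n → ZMod 2) = 2 := by
  have hsupp : ({k | (Pi.single i 1 + Pi.single j 1 : Fin n → ZMod 2) k ≠ 0} : Finset _)
      = {i, j} := by
    ext k
    simp only [mem_filter, mem_univ, true_and, single_add_single_ne_zero_iff hij, mem_insert,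
      mem_singleton]
  rw [wt, hammingNorm, hsupp, card_pair hij]

lemma single_add_single_eq_iff {x : Fin n → ZMod 2} (hx : wt x = 2) (hij : i ≠ j) :
    Pi.single i 1 + Pi.single j 1 = x ↔ x i ≠ 0 ∧ x j ≠ 0 := by
  constructor
  · rintro rfl
    exact ⟨(single_add_single_ne_zero_iff hij i).2 (Or.inl rfl),
      (single_add_single_ne_zero_iff hij j).2 (Or.inr rfl)⟩
  · rintro ⟨hi, hj⟩
    have hsupp : ({i, j} : Finset (Fin n)) = ({k | x k ≠ 0} : Finset (Fin n)) := by
      refine eq_of_subset_of_card_le ?_ ?_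
      · intro k hk
        rcases mem_insert.1 hk with rfl | hk
        · simpa using hi
        · simpa [mem_singleton.1 hk] using hj
      · rw [card_pair hij]; exact hx.le
    refine eq_of_ne_zero_iff fun k => ?_
    have hk := congrArg (k ∈ ·) hsupp
    simp only [mem_insert, mem_singleton, mem_filter, mem_univ, true_and, eq_iff_iff] at hk
    rw [single_add_single_ne_zero_iff hij, hk]

lemma single_add_single_mem_dualCode_iff (C : Submodule (ZMod 2) (Fin n → ZMod 2)) :
    Pi.single i 1 + Pi.single j 1 ∈ dualCode C ↔ ∀ c ∈ C, c i = c j := by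
  have hdot : ∀ c : Fin n → ZMod 2, ∑ k, (Pi.single i 1 + Pi.single j 1 : Fin n → ZMod 2) k * c k
      = c i + c j := by
    intro c
    simp [add_mul, sum_add_distrib, Pi.single_apply]
  change (∀ c ∈ C, _ = _) ↔ _
  simp only [hdot, CharTwo.add_eq_zero]

end WeightTwo

lemma two_mul_card_apply_ne_zero {G : Type*} [AddGroup G] [Fintype G] [DecidableEq G]
    (φ : G →+ ZMod 2) {d : G} (hd : φ d ≠ 0) :
    2 * #{g | φ g ≠ 0} = Fintype.card G := by
  have hd1 : φ d = 1 := zmod_two_ne_zero_iff.1 hd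
  have htranslate : #{g | φ g ≠ 0} = #{g | ¬φ g ≠ 0} := by
    refine card_nbij' (· + d) (· + -d) ?_ ?_ (fun g _ => by simp) (fun g _ => by simp)
    all_goals
      intro g hg
      simp only [coe_filter, mem_univ, true_and, Set.mem_ofPred_eq, map_add, map_neg, hd1] at hg ⊢
      revert hg
      generalize φ g = a
      revert a
      decide
  rw [two_mul]
  nth_rewrite 2 [htranslate]
  simpa using card_filter_add_card_filter_not (s := (univ : Finset G)) (fun g => φ g ≠ 0)

section Code

open scoped Classical

variable (C : Submodule (ZMod 2) (Fin n → ZMod 2))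

lemma wd_eq_card_filter (w : ℕ) : wd C w = #{c : C | wt c.1 = w} := by
  rw [wd, ← Nat.card_congr (Equiv.subtypeSubtypeEquivSubtypeInter (· ∈ C) (wt · = w)),
    Nat.card_eq_fintype_card, Fintype.card_subtype]

lemma wd_zero : wd C 0 = 1 := by
  rw [wd, Nat.card_eq_one_iff_exists]
  refine ⟨⟨0, C.zero_mem, hammingNorm_zero⟩, fun c => Subtype.ext ?_⟩
  exact hammingNorm_eq_zero.1 c.2.2

lemma wd_self (hone : 1 ∈ C) : wd C n = 1 := by
  rw [wd, Nat.card_eq_one_iff_exists]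
  exact ⟨⟨1, hone, wt_one⟩, fun c => Subtype.ext (eq_one_of_wt_eq c.2.2)⟩

lemma wd_sub (hone : 1 ∈ C) {w : ℕ} (hw : w ≤ n) : wd C (n - w) = wd C w := by
  refine Nat.card_congr (Equiv.subtypeEquiv (Equiv.addRight 1) fun c => ?_)
  have := wt_add_wt_add_one c
  simp only [Equiv.coe_addRight, C.add_mem_iff_left hone]
  exact and_congr_right fun _ => by omega

lemma sum_wt_eq_sum_wd (T : Finset ℕ) (hT : ∀ c ∈ C, wt c ∈ T) (f : ℕ → ℕ) :
    ∑ c : C, f (wt c.1) = ∑ w ∈ T, wd C w * f w := by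
  rw [← sum_fiberwise_of_maps_to (g := fun c : C => wt c.1)
    (fun c _ => hT c c.2)]
  refine sum_congr rfl fun w _ => ?_
  rw [wd_eq_card_filter, ← smul_eq_mul, ← sum_const]
  exact sum_congr rfl fun c hc => by rw [(mem_filter.1 hc).2]

noncomputable def equalColumnPairs : Finset (Fin n × Fin n) := {p | ∀ c ∈ C, c p.1 = c p.2}

lemma two_mul_card_apply_ne {i j : Fin n} (h : ∃ c ∈ C, c i ≠ c j) :
    2 * #{c : C | c.1 i ≠ c.1 j} = Fintype.card C := by
  obtain ⟨d, hd, hdij⟩ := h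
  let φ : C →+ ZMod 2 := AddMonoidHom.mk' (fun c => c.1 i - c.1 j) fun a b => by
    simp only [Submodule.coe_add, Pi.add_apply]
    ring
  have hφ : ∀ c, φ c = c.1 i - c.1 j := fun _ => rfl
  simpa only [hφ, sub_ne_zero] using
    two_mul_card_apply_ne_zero φ (d := ⟨d, hd⟩) (by rwa [hφ, sub_ne_zero])

lemma two_mul_card_apply_ne_add_ite (p : Fin n × Fin n) :
    2 * #{c : C | c.1 p.1 ≠ c.1 p.2}
      + (if p ∈ equalColumnPairs C then Fintype.card C else 0) = Fintype.card C := by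
  by_cases hp : p ∈ equalColumnPairs C
  · have hp' : ∀ c ∈ C, c p.1 = c p.2 := (mem_filter.1 hp).2
    rw [if_pos hp, filter_false_of_mem fun c _ => not_not.2 (hp' c.1 c.2), card_empty,
      mul_zero, zero_add]
  · have hsep : ∃ c ∈ C, c p.1 ≠ c p.2 := by
      simpa [equalColumnPairs] using hp
    rw [if_neg hp, add_zero, two_mul_card_apply_ne C hsep]

theorem four_mul_sum_wt_mul_sub_wt_add :
    4 * ∑ c : C, wt c.1 * (n - wt c.1)
      + Fintype.card C * #(equalColumnPairs C) = Fintype.card C * (n * n) := by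
  have hdouble : ∑ c : C, #{p : Fin n × Fin n | c.1 p.1 ≠ c.1 p.2}
      = ∑ p : Fin n × Fin n, #{c : C | c.1 p.1 ≠ c.1 p.2} :=
    sum_card_bipartiteAbove_eq_sum_card_bipartiteBelow _
  have hequal : ∑ p : Fin n × Fin n, (if p ∈ equalColumnPairs C then Fintype.card C else 0)
      = Fintype.card C * #(equalColumnPairs C) := by
    rw [sum_ite_mem, univ_inter, sum_const, smul_eq_mul, mul_comm]
  calc 4 * ∑ c : C, wt c.1 * (n - wt c.1)
        + Fintype.card C * #(equalColumnPairs C)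
      = ∑ p : Fin n × Fin n, (2 * #{c : C | c.1 p.1 ≠ c.1 p.2}
        + (if p ∈ equalColumnPairs C then Fintype.card C else 0)) := by
        simp only [sum_add_distrib, ← mul_sum, ← hdouble, card_filter_apply_ne, hequal]
        ring
    _ = Fintype.card C * (n * n) := by
        simp only [two_mul_card_apply_ne_add_ite, sum_const, card_univ, Fintype.card_prod,
          Fintype.card_fin, smul_eq_mul]
        ring

lemma card_filter_ne_equalColumnPairs :
    #{p ∈ equalColumnPairs C | p.1 ≠ p.2} = 2 * wd (dualCode C) 2 := by
  set D : Finset (Fin n → ZMod 2) := {x | x ∈ dualCode C ∧ wt x = 2}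
  have hD : wd (dualCode C) 2 = #D := by
    rw [wd, Nat.card_eq_fintype_card, Fintype.card_subtype]
  have hmaps : ∀ p ∈ ({p ∈ equalColumnPairs C | p.1 ≠ p.2} : Finset _),
      Pi.single p.1 1 + Pi.single p.2 1 ∈ D := by
    intro p hp
    obtain ⟨hpE, hne⟩ := mem_filter.1 hp
    simpa [D, single_add_single_mem_dualCode_iff, wt_single_add_single hne] using
      (mem_filter.1 hpE).2
  have hfiber : ∀ x ∈ D, #{p ∈ {p ∈ equalColumnPairs C | p.1 ≠ p.2} |
      Pi.single p.1 1 + Pi.single p.2 1 = x} = 2 := by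
    intro x hx
    obtain ⟨hxC, hx2⟩ := (mem_filter.1 hx).2
    have hsupp : {p ∈ {p ∈ equalColumnPairs C | p.1 ≠ p.2} |
        Pi.single p.1 1 + Pi.single p.2 1 = x} = ({i | x i ≠ 0} : Finset (Fin n)).offDiag := by
      ext p
      simp only [mem_filter, mem_offDiag, mem_univ, true_and, equalColumnPairs]
      constructor
      · rintro ⟨⟨-, hne⟩, hpx⟩
        exact ⟨((single_add_single_eq_iff hx2 hne).1 hpx).1,
          ((single_add_single_eq_iff hx2 hne).1 hpx).2, hne⟩
      · rintro ⟨h1, h2, hne⟩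
        have hpx := (single_add_single_eq_iff hx2 hne).2 ⟨h1, h2⟩
        exact ⟨⟨(single_add_single_mem_dualCode_iff C).1 (hpx ▸ hxC), hne⟩, hpx⟩
    rw [hsupp, offDiag_card]
    change wt x * wt x - wt x = 2
    rw [hx2]
  rw [card_eq_sum_card_fiberwise hmaps, sum_congr rfl hfiber, sum_const, smul_eq_mul, hD,
    mul_comm]

lemma card_equalColumnPairs : #(equalColumnPairs C) = n + 2 * wd (dualCode C) 2 := by
  have hdiag : {p ∈ equalColumnPairs C | p.1 = p.2} = (univ : Finset (Fin n)).diag := by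
    ext p
    simp only [mem_filter, mem_diag, mem_univ, true_and, equalColumnPairs]
    exact ⟨And.right, fun h => ⟨fun c _ => congrArg c h, h⟩⟩
  rw [← card_filter_ne_equalColumnPairs,
    ← card_filter_add_card_filter_not (s := equalColumnPairs C) (fun p => p.1 = p.2), hdiag,
    diag_card, card_univ, Fintype.card_fin]

end Code

end BinaryCode

open BinaryCode

theorem stmt16_general (C : Submodule (ZMod 2) (Fin 56 → ZMod 2))
    (hk : Module.finrank (ZMod 2) C = 9)
    (hw : ∀ c ∈ C, c ≠ 0 → wt c = 24 ∨ wt c = 32 ∨ wt c = 56)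
    (h56 : ∃ c ∈ C, wt c = 56) :
    wd C 56 = 1 ∧ wd C 24 = wd C 32 ∧ wd C 24 = 255 ∧
    wd (dualCode C) 2 = 10 := by
  classical
  obtain ⟨c, hcC, hc⟩ := h56
  have hone : (1 : Fin 56 → ZMod 2) ∈ C := eq_one_of_wt_eq hc ▸ hcC
  have hcard : Fintype.card C = 2 ^ 9 := by
    rw [Module.card_eq_pow_finrank (K := ZMod 2), ZMod.card, hk]
  have hT : ∀ x ∈ C, wt x ∈ ({0, 24, 32, 56} : Finset ℕ) := by
    intro x hx
    by_cases h0 : x = 0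
    · simp [h0, wt]
    · rcases hw x hx h0 with h | h | h <;> simp [h]
  have hsize : wd C 0 + (wd C 24 + (wd C 32 + wd C 56)) = 2 ^ 9 := by
    simpa [sum_insert, hcard] using (sum_wt_eq_sum_wd C _ hT fun _ => 1).symm
  have hmoment : 4 * (wd C 24 * 768 + wd C 32 * 768) + 2 ^ 9 * #(equalColumnPairs C)
      = 2 ^ 9 * 56 ^ 2 := by
    have := four_mul_sum_wt_mul_sub_wt_add C
    rw [sum_wt_eq_sum_wd C _ hT fun w => w * (56 - w)] at this
    simpa [sum_insert, hcard] using this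
  have h0 := wd_zero C
  have h56 := wd_self C hone
  have hsym : wd C 32 = wd C 24 := wd_sub C hone (w := 24) (by norm_num)
  have hdual := card_equalColumnPairs C
  omega

theorem stmt16 (C : Submodule (ZMod 2) (Fin 56 → ZMod 2))
    (hk : Module.finrank (ZMod 2) C = 9) (hfull : FullLength C)
    (hw : ∀ c ∈ C, c ≠ 0 → wt c = 24 ∨ wt c = 32 ∨ wt c = 56)
    (h56 : ∃ c ∈ C, wt c = 56) :
    wd C 56 = 1 ∧ wd C 24 = wd C 32 ∧ wd C 24 = 255 ∧
    wd (dualCode C) 2 = 10 :=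
  stmt16_general C hk hw h56
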